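/- arXiv:1108.2863 — 11 statements merged into one kernel-verified Lean document; each statement's English description precedes it below -/
import Mathlib

section
/- Let R be a ring and J(R) its Jacobson radical. Then the clique number of the unit graph of the quotient ring R/J(R) is at most the clique number of the unit graph of R, i.e., ω(G(R/J(R))) ≤ ω(G(R)). -/
/-! An element of `R` that is invertible modulo `J(R)` is invertible: a left inverse modulo `J(R)`
yields a genuine one because `1 + j` is left invertible for `j ∈ J(R)`, and applying this to that
left inverse as well shows it is two-sided. Hence any set-theoretic section of `R → R/J(R)` sends
adjacent vertices of `G(R/J(R))` to adjacent vertices of `G(R)`, and being injective it maps every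
clique onto a clique of the same cardinality. -/

def unitGraph (R : Type*) [Ring R] : SimpleGraph R where
  Adj a b := a ≠ b ∧ IsUnit (a + b)
  symm := ⟨fun a b ⟨h1, h2⟩ => ⟨h1.symm, add_comm a b ▸ h2⟩⟩
  loopless := ⟨fun _ ⟨h, _⟩ => h rfl⟩

noncomputable def ecliqueNum {V : Type*} (G : SimpleGraph V) : ℕ∞ :=
  ⨆ s ∈ {s : Set V | G.IsClique s}, s.encard

noncomputable def eindepNum {V : Type*} (G : SimpleGraph V) : ℕ∞ :=
  ⨆ s ∈ {s : Set V | s.Pairwise fun a b => ¬ G.Adj a b}, s.encard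

noncomputable def ringJacobson (R : Type*) [Ring R] : TwoSidedIdeal R :=
  (⊥ : TwoSidedIdeal R).jacobson

abbrev modJacobson (R : Type*) [Ring R] := (ringJacobson R).ringCon.Quotient

open Function

section

variable {V W : Type*} {G : SimpleGraph V} {H : SimpleGraph W}

theorem SimpleGraph.IsClique.image {s : Set V} (hs : G.IsClique s) (f : G →g H) :
    H.IsClique (f '' s) := by
  rintro _ ⟨a, ha, rfl⟩ _ ⟨b, hb, rfl⟩ hab
  exact f.map_rel (hs ha hb fun h => hab (h ▸ rfl))

theorem ecliqueNum_le_of_injective (f : G →g H) (hf : Injective f) :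
    ecliqueNum G ≤ ecliqueNum H :=
  iSup₂_le fun s hs => calc
    s.encard = (f '' s).encard := hf.injOn.encard_image.symm
    _ ≤ ecliqueNum H := le_biSup (fun t : Set W => t.encard) (hs.image f)

end

section

variable {R S : Type*} [Ring R] [Ring S]

theorem ecliqueNum_unitGraph_le_of_surjective (f : R →+* S) [IsLocalHom f] (hf : Surjective f) :
    ecliqueNum (unitGraph S) ≤ ecliqueNum (unitGraph R) := by
  let g : unitGraph S →g unitGraph R :=
    { toFun := surjInv hf
      map_rel' := fun {a b} ⟨hab, hu⟩ => by
        refine ⟨(injective_surjInv hf).ne hab, (isUnit_map_iff f _).1 ?_⟩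
        rwa [map_add, surjInv_eq hf, surjInv_eq hf] }
  exact ecliqueNum_le_of_injective g (injective_surjInv hf)

theorem exists_mul_eq_one_of_mul_sub_one_mem_jacobson {x y : R}
    (h : y * x - 1 ∈ (⊥ : TwoSidedIdeal R).jacobson) : ∃ z, z * x = 1 := by
  rw [← TwoSidedIdeal.mem_asIdeal, TwoSidedIdeal.asIdeal_jacobson] at h
  obtain ⟨s, hs⟩ := Ideal.exists_mul_sub_mem_of_sub_one_mem_jacobson _ h
  exact ⟨s * y, by simpa [sub_eq_zero, mul_assoc] using hs⟩

theorem isLocalHom_mk'_of_le_jacobson {I : TwoSidedIdeal R}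
    (hI : I ≤ (⊥ : TwoSidedIdeal R).jacobson) : IsLocalHom I.ringCon.mk' := by
  have exists_left_inv {a b : R} (h : I.ringCon.mk' b * I.ringCon.mk' a = 1) :
      ∃ c, c * a = 1 := by
    refine exists_mul_eq_one_of_mul_sub_one_mem_jacobson (y := b) (hI ?_)
    rw [← TwoSidedIdeal.rel_iff, ← RingCon.eq]
    simpa using h
  refine ⟨fun x ⟨u, hu⟩ => ?_⟩
  obtain ⟨y, hy⟩ := I.ringCon.mk'_surjective ↑u⁻¹
  obtain ⟨a, hax⟩ := exists_left_inv (a := x) (b := y) (by rw [hy, ← hu, u.inv_mul])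
  have hau : I.ringCon.mk' a = ↑u⁻¹ := by
    rw [← mul_one (I.ringCon.mk' a), ← u.mul_inv, hu, ← mul_assoc, ← map_mul, hax, map_one,
      one_mul]
  obtain ⟨c, hca⟩ := exists_left_inv (a := a) (b := x) (by rw [hau, ← hu, u.mul_inv])
  have hcx : c = x := by rw [← mul_one c, ← hax, ← mul_assoc, hca, one_mul]
  exact ⟨⟨x, a, hcx ▸ hca, hax⟩, rfl⟩

end

/-- The clique number of the unit graph of `R/J(R)` is at most that of `G(R)`. -/
theorem ecliqueNum_unitGraph_modJacobson_le (R : Type*) [Ring R] :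
    ecliqueNum (unitGraph (modJacobson R)) ≤ ecliqueNum (unitGraph R) :=
  have := isLocalHom_mk'_of_le_jacobson (le_refl (ringJacobson R))
  ecliqueNum_unitGraph_le_of_surjective _ (ringJacobson R).ringCon.mk'_surjective
end

section
/- Let R be a ring and J(R) its Jacobson radical. Then the chromatic number of the unit graph of R/J(R) is at most the chromatic number of the unit graph of R, i.e., χ(G(R/J(R))) ≤ χ(G(R)). -/
/-!
A graph homomorphism `G(R/J(R)) →g G(R)` is given by any set-theoretic section of the quotient map.
It preserves adjacency because units lift modulo `J(R)`: if `r` becomes invertible modulo `J(R)`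
with inverse the class of `u`, then `u * r` and `r * u` lie in `1 + J(R)`, hence are units, so `r`
has both a left and a right inverse.
-/

lemma isUnit_of_isUnit_mul_of_isUnit_mul {M : Type*} [Monoid M] {a b c : M}
    (hab : IsUnit (a * b)) (hbc : IsUnit (b * c)) : IsUnit b := by
  obtain ⟨u, hu⟩ := hab
  obtain ⟨v, hv⟩ := hbc
  have hl : (↑u⁻¹ * a) * b = 1 := by rw [mul_assoc, ← hu, Units.inv_mul]
  have hr : b * (c * ↑v⁻¹) = 1 := by rw [← mul_assoc, ← hv, Units.mul_inv]
  exact isUnit_iff_exists.2 ⟨_, hr, left_inv_eq_right_inv hl hr ▸ hl⟩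

/-- The noncommutative version of `Ideal.isUnit_of_sub_one_mem_jacobson_bot`. -/
lemma isUnit_of_sub_one_mem_jacobson_bot {R : Type*} [Ring R] {r : R}
    (h : r - 1 ∈ Ideal.jacobson (⊥ : Ideal R)) : IsUnit r := by
  have exists_left_inv (x : R) (hx : x - 1 ∈ Ideal.jacobson ⊥) : ∃ y, y * x = 1 := by
    obtain ⟨y, hy⟩ := Ideal.exists_mul_sub_mem_of_sub_one_mem_jacobson x hx
    exact ⟨y, sub_eq_zero.1 ((Submodule.mem_bot R).1 hy)⟩
  obtain ⟨s, hs⟩ := exists_left_inv r h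
  -- `s - 1 = s * (1 - r)` lies in the left ideal `J(R)`, so `s` has a left inverse too.
  have hs₁ : s - 1 ∈ Ideal.jacobson ⊥ := by
    have := Ideal.mul_mem_left _ s (neg_mem h)
    rwa [neg_sub, mul_sub, mul_one, hs] at this
  obtain ⟨t, ht⟩ := exists_left_inv s hs₁
  exact isUnit_iff_exists.2 ⟨s, left_inv_eq_right_inv ht hs ▸ ht, hs⟩

lemma isLocalHom_of_surjective_of_ker_le_jacobson {R S : Type*} [Ring R] [Ring S]
    {f : R →+* S} (hf : Function.Surjective f) (hker : RingHom.ker f ≤ Ideal.jacobson ⊥) :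
    IsLocalHom f where
  map_nonunit r hr := by
    obtain ⟨u, hu⟩ := hf ↑hr.unit⁻¹
    have isUnit_of_map_eq_one (s : R) (hs : f s = 1) : IsUnit s :=
      isUnit_of_sub_one_mem_jacobson_bot (hker (by simp [RingHom.mem_ker, hs]))
    exact isUnit_of_isUnit_mul_of_isUnit_mul (isUnit_of_map_eq_one (u * r) (by simp [hu]))
      (isUnit_of_map_eq_one (r * u) (by simp [hu]))

lemma ker_mk'_ringJacobson_le_jacobson (R : Type*) [Ring R] :
    RingHom.ker (ringJacobson R).ringCon.mk' ≤ Ideal.jacobson ⊥ := by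
  intro x hx
  have hJ : x ∈ ringJacobson R := by
    rw [TwoSidedIdeal.mem_iff, ← RingCon.eq]
    simpa [RingHom.mem_ker] using hx
  rwa [← TwoSidedIdeal.mem_asIdeal, ringJacobson, TwoSidedIdeal.asIdeal_jacobson,
    TwoSidedIdeal.bot_asIdeal] at hJ

noncomputable def unitGraphHomOfSurjective {R S : Type*} [Ring R] [Ring S] {f : R →+* S}
    [IsLocalHom f] (hf : Function.Surjective f) : unitGraph S →g unitGraph R where
  toFun := Function.surjInv hf
  map_rel' {x y} hxy :=
    ⟨(Function.injective_surjInv hf).ne hxy.1,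
      isUnit_of_map_unit f _ (by
        rw [map_add, Function.surjInv_eq hf, Function.surjInv_eq hf]
        exact hxy.2)⟩

theorem chromaticNumber_unitGraph_le_of_surjective {R S : Type*} [Ring R] [Ring S]
    {f : R →+* S} [IsLocalHom f] (hf : Function.Surjective f) :
    (unitGraph S).chromaticNumber ≤ (unitGraph R).chromaticNumber :=
  SimpleGraph.chromaticNumber_mono_of_hom (unitGraphHomOfSurjective hf)

/-- The chromatic number of the unit graph of `R/J(R)` is at most that of `G(R)`. -/
theorem chromaticNumber_unitGraph_modJacobson_le (R : Type*) [Ring R] :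
    (unitGraph (modJacobson R)).chromaticNumber ≤ (unitGraph R).chromaticNumber := by
  have hsurj := (ringJacobson R).ringCon.mk'_surjective
  have := isLocalHom_of_surjective_of_ker_le_jacobson hsurj (ker_mk'_ringJacobson_le_jacobson R)
  exact chromaticNumber_unitGraph_le_of_surjective hsurj
end

section
/- Let R be a left Artinian ring such that the quotient ring R/J(R) is finite. Then R is a finite ring. -/
/-! The Jacobson radical `J` of a left Artinian ring is nilpotent and `R ⧸ J` is semisimple, so an
Artinian module is filtered by the submodules `J ^ k • ⊤` with layers that are semisimple modules
over `R ⧸ J`. Being Artinian, each layer is finitely generated over the finite ring `R ⧸ J`, hence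
finite. -/

namespace IsSemiprimaryRing

variable {R : Type*} [Ring R] [IsSemiprimaryRing R] [Finite (R ⧸ Ring.jacobson R)]

theorem finite_of_isArtinian_of_finite_quotient_jacobson (M : Type*) [AddCommGroup M]
    [Module R M] [IsArtinian R M] : Finite M := by
  refine IsSemiprimaryRing.induction R R M (P := fun M _ _ _ ↦ IsArtinian R M → Finite M)
    (fun M _ _ _ _ _ hJ _ ↦ ?_) (fun M _ _ _ _ hN hQ _ ↦ ?_) ‹_›
  · let _ := hJ.module
    have : Module.Finite R M := (IsSemisimpleModule.finite_tfae.out 2 0).mp ‹_›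
    have : Module.Finite (R ⧸ Ring.jacobson R) M :=
      (hJ.semilinearMap.finite_iff_of_bijective Function.bijective_id).mp this
    exact Module.finite_of_finite (R ⧸ Ring.jacobson R)
  · let N : Submodule R M := Ring.jacobson R • ⊤
    have : Finite N := hN inferInstance
    have : Finite (M ⧸ N.toAddSubgroup) := hQ inferInstance
    exact Finite.of_addSubgroup_quotient N.toAddSubgroup

end IsSemiprimaryRing

theorem asIdeal_ringJacobson (R : Type*) [Ring R] :
    (ringJacobson R).asIdeal = Ring.jacobson R := by
  rw [ringJacobson, TwoSidedIdeal.asIdeal_jacobson, TwoSidedIdeal.bot_asIdeal, Ideal.jacobson_bot]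

noncomputable def modJacobsonEquivQuotient (R : Type*) [Ring R] :
    modJacobson R ≃ R ⧸ Ring.jacobson R :=
  Quotient.congr (Equiv.refl R) fun a b ↦ by
    change (ringJacobson R).ringCon a b ↔ Submodule.quotientRel _ a b
    rw [TwoSidedIdeal.rel_iff, Submodule.quotientRel_def, ← asIdeal_ringJacobson,
      TwoSidedIdeal.mem_asIdeal]

/-- A left Artinian ring whose quotient by the Jacobson radical is finite is itself finite. -/
theorem finite_of_isArtinianRing_of_finite_modJacobson (R : Type*) [Ring R]
    [IsArtinianRing R] (h : Finite (modJacobson R)) : Finite R :=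
  have : Finite (R ⧸ Ring.jacobson R) := .of_equiv _ (modJacobsonEquivQuotient R)
  IsSemiprimaryRing.finite_of_isArtinian_of_finite_quotient_jacobson (R := R) R
end

section
/- Let R be a ring such that the clique number of the unit graph G(R) is finite, R has only finitely many maximal left ideals, and 2 is a unit of R. Then R is a finite ring. -/
/-!
If `x * y = 1 ≠ y * x`, the elements `yⁱ * (1 - y * x) * xⁱ` are nonzero orthogonal idempotents,
and a maximal left ideal containing `1 - eᵢ` contains every `eⱼ` with `j ≠ i` but not `eᵢ`; so a
ring with finitely many maximal left ideals is Dedekind-finite, and an element outside every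
maximal left ideal is a unit.

Let `v = 1/2` and let `K` be the intersection of the maximal left ideals of finite additive index,
itself of finite index. For `a, c ∈ v + K` the sum `a + c ∈ 1 + K` avoids every maximal left ideal
of finite index, so it is a unit as soon as it avoids the finitely many of infinite index. By
B. H. Neumann's lemma, the coset `v + K` of an infinite ring is not covered by finitely many points
and cosets of subgroups of infinite index, so every finite clique in `v + K` extends to a larger
one.
-/

open scoped Pointwise

section DedekindFinite

variable {R : Type*} [Ring R]

lemma IsIdempotentElem.span_singleton_one_sub_ne_top {e : R} (he : IsIdempotentElem e)
    (hne : e ≠ 0) : Ideal.span {1 - e} ≠ ⊤ := by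
  rw [Ne, Ideal.eq_top_iff_one, Ideal.mem_span_singleton']
  rintro ⟨r, hr⟩
  apply hne
  calc e = r * (1 - e) * e := by rw [hr, one_mul]
    _ = 0 := by rw [mul_assoc, sub_mul, one_mul, he.eq, sub_self, mul_zero]

lemma OrthogonalIdempotents.finite_of_finite_isMaximal {ι : Type*} {e : ι → R}
    (he : OrthogonalIdempotents e) (hne : ∀ i, e i ≠ 0)
    (hmax : {I : Ideal R | I.IsMaximal}.Finite) : Finite ι := by
  choose M hM hle using fun i ↦
    Ideal.exists_le_maximal _ ((he.idem i).span_singleton_one_sub_ne_top (hne i))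
  have one_sub_mem i : 1 - e i ∈ M i := hle i (Ideal.mem_span_singleton_self _)
  have mem_of_ne {i j} (hij : i ≠ j) : e i ∈ M j := by
    simpa [mul_sub, he.ortho hij] using (M j).mul_mem_left (e i) (one_sub_mem j)
  have notMem i : e i ∉ M i := fun h ↦
    (hM i).ne_top <| (Ideal.eq_top_iff_one _).2 <| by simpa using (M i).add_mem (one_sub_mem i) h
  have := hmax.to_subtype
  refine Finite.of_injective (fun i ↦ (⟨M i, hM i⟩ : {I : Ideal R | I.IsMaximal})) fun i j hij ↦ ?_
  by_contra hne
  have hMij : M i = M j := congrArg Subtype.val hij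
  exact notMem i (hMij ▸ mem_of_ne hne)

lemma pow_mul_pow_add_of_mul_eq_one {x y : R} (h : x * y = 1) (i d : ℕ) :
    x ^ i * y ^ (i + d) = y ^ d := by
  induction i with
  | zero => simp
  | succ i ih =>
    rw [add_right_comm, pow_succ, pow_succ', mul_assoc, ← mul_assoc x, h, one_mul, ih]

lemma pow_add_mul_pow_of_mul_eq_one {x y : R} (h : x * y = 1) (i d : ℕ) :
    x ^ (i + d) * y ^ i = x ^ d := by
  induction i with
  | zero => simp
  | succ i ih =>
    rw [add_right_comm, pow_succ, pow_succ', mul_assoc, ← mul_assoc x, h, one_mul, ih]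

lemma orthogonalIdempotents_pow_mul_one_sub_mul_pow {x y : R} (h : x * y = 1) :
    OrthogonalIdempotents fun i : ℕ ↦ y ^ i * (1 - y * x) * x ^ i := by
  have hxe : x * (1 - y * x) = 0 := by rw [mul_sub, ← mul_assoc, h, one_mul, mul_one, sub_self]
  have hey : (1 - y * x) * y = 0 := by rw [sub_mul, mul_assoc, h, one_mul, mul_one, sub_self]
  have hee : (1 - y * x) * (1 - y * x) = 1 - y * x := by
    rw [sub_mul (1 : R), one_mul, mul_assoc, hxe, mul_zero, sub_zero]
  refine ⟨fun i ↦ ?_, fun i j hij ↦ ?_⟩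
  · simp only [IsIdempotentElem, mul_assoc]
    rw [← mul_assoc (x ^ i), pow_mul_pow_eq_one i h, one_mul, ← mul_assoc (1 - y * x), hee]
  · simp only [mul_assoc]
    obtain hlt | hlt := hij.lt_or_gt
    · obtain ⟨d, rfl⟩ := Nat.exists_eq_add_of_lt hlt
      rw [← mul_assoc (x ^ i), add_assoc, pow_mul_pow_add_of_mul_eq_one h, pow_succ', mul_assoc y,
        ← mul_assoc (1 - y * x) y, hey, zero_mul, mul_zero]
    · obtain ⟨d, rfl⟩ := Nat.exists_eq_add_of_lt hlt
      rw [← mul_assoc (x ^ (j + d + 1)), add_assoc, pow_add_mul_pow_of_mul_eq_one h, pow_succ,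
        mul_assoc, ← mul_assoc x, hxe, zero_mul, mul_zero, mul_zero, mul_zero]

lemma isDedekindFiniteMonoid_of_finite_isMaximal (hmax : {I : Ideal R | I.IsMaximal}.Finite) :
    IsDedekindFiniteMonoid R := by
  refine ⟨fun {x y} h ↦ ?_⟩
  by_contra hyx
  have hne (i : ℕ) : y ^ i * (1 - y * x) * x ^ i ≠ 0 := fun h0 ↦ hyx <| Eq.symm <| sub_eq_zero.1 <|
    calc 1 - y * x = x ^ i * (y ^ i * (1 - y * x) * x ^ i) * y ^ i := by
          simp only [mul_assoc]
          rw [pow_mul_pow_eq_one i h, mul_one, ← mul_assoc, pow_mul_pow_eq_one i h, one_mul]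
      _ = 0 := by rw [h0, mul_zero, zero_mul]
  have := (orthogonalIdempotents_pow_mul_one_sub_mul_pow h).finite_of_finite_isMaximal hne hmax
  exact not_finite ℕ

lemma isUnit_of_forall_notMem_isMaximal [IsDedekindFiniteMonoid R] {z : R}
    (hz : ∀ I : Ideal R, I.IsMaximal → z ∉ I) : IsUnit z := by
  have hspan : Ideal.span {z} = ⊤ := by
    by_contra h
    obtain ⟨M, hM, hle⟩ := Ideal.exists_le_maximal _ h
    exact hz M hM (hle (Ideal.mem_span_singleton_self z))
  obtain ⟨a, ha⟩ := Ideal.mem_span_singleton'.1 (hspan ▸ Submodule.mem_top : (1 : R) ∈ _)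
  exact .of_mul_eq_one_right a ha

end DedekindFinite

@[to_additive]
theorem Subgroup.exists_mem_leftCoset_forall_notMem_leftCoset {G : Type*} [Group G]
    (K : Subgroup G) [K.FiniteIndex] (v : G) {ι : Type*} [Finite ι] {H : ι → Subgroup G}
    (hH : ∀ i, ¬(H i).FiniteIndex) (g : ι → G) :
    ∃ a ∈ v • (K : Set G), ∀ i, a ∉ g i • (H i : Set G) := by
  classical
  by_contra! hcov
  have : Fintype ((G ⧸ K) × ι) := Fintype.ofFinite _
  have hcovers : ⋃ k ∈ (Finset.univ : Finset ((G ⧸ K) × ι)),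
      (k.1.out * v⁻¹ * g k.2) • (H k.2 : Set G) = Set.univ := by
    refine Set.eq_univ_of_forall fun z ↦ ?_
    have hz : (QuotientGroup.mk z : G ⧸ K).out⁻¹ * z ∈ K :=
      QuotientGroup.eq.1 (QuotientGroup.out_eq' _)
    obtain ⟨i, hi⟩ := hcov (v * ((QuotientGroup.mk z : G ⧸ K).out⁻¹ * z)) ⟨_, hz, rfl⟩
    refine Set.mem_iUnion₂.2 ⟨(QuotientGroup.mk z, i), Finset.mem_univ _, ?_⟩
    rw [mem_leftCoset_iff] at hi ⊢
    simpa [mul_assoc] using hi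
  obtain ⟨k, -, hk⟩ := exists_finiteIndex_of_leftCoset_cover hcovers
  exact hH k.2 hk

lemma ecliqueNum_eq_top_of_forall_exists_adj {V : Type*} {G : SimpleGraph V} (X : Set V)
    (h : ∀ s : Finset V, ↑s ⊆ X → ∃ a ∈ X, ∀ c ∈ s, G.Adj a c) : ecliqueNum G = ⊤ := by
  classical
  have grow (n : ℕ) : ∃ s : Finset V, ↑s ⊆ X ∧ G.IsNClique n s := by
    induction n with
    | zero => exact ⟨∅, by simp, by simp⟩
    | succ n ih =>
      obtain ⟨s, hsX, hs⟩ := ih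
      obtain ⟨a, haX, ha⟩ := h s hsX
      exact ⟨insert a s, by simp [Set.insert_subset_iff, haX, hsX],
        hs.insert fun c hc ↦ ha c hc⟩
  refine ENat.eq_top_iff_forall_ge.2 fun n ↦ ?_
  obtain ⟨s, -, hs⟩ := grow n
  calc (n : ℕ∞) = (s : Set V).encard := by rw [Set.encard_coe_eq_coe_finsetCard, hs.card_eq]
    _ ≤ ecliqueNum G := le_biSup (fun t : Set V ↦ t.encard) hs.isClique

section UnitGraph

variable {R : Type*} [Ring R]

lemma exists_finiteIndex_le_of_finite_isMaximal (hmax : {I : Ideal R | I.IsMaximal}.Finite) :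
    ∃ K : AddSubgroup R, K.FiniteIndex ∧
      ∀ m : Ideal R, m.IsMaximal → m.toAddSubgroup.FiniteIndex → K ≤ m.toAddSubgroup := by
  have : Finite {m : Ideal R // m.IsMaximal ∧ m.toAddSubgroup.FiniteIndex} :=
    (hmax.subset fun _ hm ↦ hm.1).to_subtype
  exact ⟨⨅ m : {m : Ideal R // m.IsMaximal ∧ m.toAddSubgroup.FiniteIndex}, m.1.toAddSubgroup,
    AddSubgroup.finiteIndex_iInf fun m ↦ m.2.2, fun m hm hfin ↦ iInf_le_of_le ⟨m, hm, hfin⟩ le_rfl⟩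

lemma isUnit_add_of_mem_vadd [IsDedekindFiniteMonoid R] {v : R} (hv : v + v = 1)
    {K : AddSubgroup R}
    (hK : ∀ m : Ideal R, m.IsMaximal → m.toAddSubgroup.FiniteIndex → K ≤ m.toAddSubgroup)
    {a c : R} (ha : a ∈ v +ᵥ (K : Set R)) (hc : c ∈ v +ᵥ (K : Set R))
    (hac : ∀ m : Ideal R, m.IsMaximal → ¬m.toAddSubgroup.FiniteIndex → a + c ∉ m) :
    IsUnit (a + c) := by
  refine isUnit_of_forall_notMem_isMaximal fun m hm hmem ↦ ?_
  by_cases hfin : m.toAddSubgroup.FiniteIndex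
  · obtain ⟨k, hk, rfl⟩ := ha
    obtain ⟨l, hl, rfl⟩ := hc
    have hkl : k + l ∈ m := hK m hm hfin (K.add_mem hk hl)
    have h1 : (v +ᵥ k) + (v +ᵥ l) - (k + l) = 1 := by rw [vadd_eq_add, vadd_eq_add, ← hv]; abel
    exact hm.ne_top <| (Ideal.eq_top_iff_one _).2 (h1 ▸ m.sub_mem hmem hkl)
  · exact hac m hm hfin hmem

lemma ecliqueNum_unitGraph_eq_top [Infinite R] [IsDedekindFiniteMonoid R]
    (hmax : {I : Ideal R | I.IsMaximal}.Finite) {v : R} (hv : v + v = 1) :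
    ecliqueNum (unitGraph R) = ⊤ := by
  obtain ⟨K, hK, hKle⟩ := exists_finiteIndex_le_of_finite_isMaximal hmax
  refine ecliqueNum_eq_top_of_forall_exists_adj (v +ᵥ (K : Set R)) fun s hs ↦ ?_
  let M := {m : Ideal R // m.IsMaximal ∧ ¬m.toAddSubgroup.FiniteIndex}
  have : Finite M := (hmax.subset fun _ hm ↦ hm.1).to_subtype
  -- the points of `s` enter as cosets of `⊥`, which has infinite index since `R` is infinite
  obtain ⟨a, haK, ha⟩ := K.exists_mem_leftCoset_forall_notMem_leftCoset v
    (H := Sum.elim (fun _ : s ↦ ⊥) fun p : M × s ↦ p.1.1.toAddSubgroup)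
    (Sum.forall.2 ⟨fun _ ↦ by simp [AddSubgroup.not_finiteIndex_iff, Nat.card_eq_zero_of_infinite],
      fun p ↦ p.1.2.2⟩)
    (Sum.elim (fun c ↦ c) fun p ↦ -p.2)
  refine ⟨a, haK, fun c hc ↦ ⟨?_, isUnit_add_of_mem_vadd hv hKle haK (hs hc) fun m hm hfin ↦ ?_⟩⟩
  · simpa using ha (.inl ⟨c, hc⟩)
  · simpa [mem_leftAddCoset_iff, add_comm] using ha (.inr (⟨m, hm, hfin⟩, ⟨c, hc⟩))

end UnitGraph

/-- If the unit graph of `R` has finite clique number, `R` has only finitely many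
maximal left ideals, and `2` is a unit of `R`, then `R` is a finite ring. -/
theorem finite_of_ecliqueNum_lt_top_of_finite_maximals (R : Type*) [Ring R]
    (hclique : ecliqueNum (unitGraph R) ≠ ⊤)
    (hmax : {I : Ideal R | I.IsMaximal}.Finite)
    (h2 : IsUnit (2 : R)) : Finite R := by
  have := isDedekindFiniteMonoid_of_finite_isMaximal hmax
  obtain ⟨v, hv⟩ := h2.exists_right_inv
  by_contra hfin
  have := not_finite_iff_infinite.1 hfin
  exact hclique (ecliqueNum_unitGraph_eq_top hmax (v := v) (by rw [← two_mul, hv]))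
end

section
/- Let R be a ring such that the clique number of the unit graph G(R) is finite and 2 is a unit of R. Then the Jacobson radical J(R) is a finite set. -/
section Jacobson

variable {R : Type*} [Ring R]

lemma exists_mul_one_add_eq_one_of_mem_ringJacobson {x : R} (hx : x ∈ ringJacobson R) :
    ∃ z : R, z * (1 + x) = 1 := by
  obtain ⟨z, hz⟩ := TwoSidedIdeal.mem_jacobson_iff.mp hx 1
  rw [TwoSidedIdeal.mem_bot, sub_eq_zero, mul_one] at hz
  exact ⟨z, by rw [mul_add, mul_one, add_comm, hz]⟩

/-- A left inverse `z` of `1 + x` is itself of the form `1 + x'` with `x' = -(z * x)` in the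
radical, so it has a left inverse too, which then must be `1 + x`. -/
lemma isUnit_one_add_of_mem_ringJacobson {x : R} (hx : x ∈ ringJacobson R) :
    IsUnit (1 + x) := by
  obtain ⟨z, hz⟩ := exists_mul_one_add_eq_one_of_mem_ringJacobson hx
  have hz_eq : 1 + -(z * x) = z := by
    rw [mul_add, mul_one] at hz
    rw [← hz]; abel
  obtain ⟨w, hw⟩ := exists_mul_one_add_eq_one_of_mem_ringJacobson
    ((ringJacobson R).neg_mem ((ringJacobson R).mul_mem_left z x hx))
  rw [hz_eq] at hw
  have hw_eq : w = 1 + x := left_inv_eq_right_inv hw hz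
  exact ⟨⟨1 + x, z, hw_eq ▸ hw, hz⟩, rfl⟩

lemma IsUnit.add_of_mem_ringJacobson {u x : R} (hu : IsUnit u) (hx : x ∈ ringJacobson R) :
    IsUnit (u + x) := by
  obtain ⟨u, rfl⟩ := hu
  have h : (u : R) + x = u * (1 + ↑u⁻¹ * x) := by
    rw [mul_add, mul_one, ← mul_assoc, Units.mul_inv, one_mul]
  rw [h]
  exact u.isUnit.mul (isUnit_one_add_of_mem_ringJacobson ((ringJacobson R).mul_mem_left _ _ hx))

lemma isClique_unitGraph_add_ringJacobson {a : R} (ha : IsUnit (a + a)) :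
    (unitGraph R).IsClique ((a + ·) '' (ringJacobson R : Set R)) := by
  rintro _ ⟨j, hj, rfl⟩ _ ⟨k, hk, rfl⟩ hne
  refine ⟨hne, ?_⟩
  have h : a + j + (a + k) = (a + a) + (j + k) := by abel
  rw [h]
  exact ha.add_of_mem_ringJacobson ((ringJacobson R).add_mem hj hk)

end Jacobson

lemma encard_le_ecliqueNum {V : Type*} {G : SimpleGraph V} {s : Set V} (hs : G.IsClique s) :
    s.encard ≤ ecliqueNum G :=
  le_iSup₂ (f := fun (s : Set V) (_ : G.IsClique s) => s.encard) s hs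

/-- If the unit graph of `R` has finite clique number and `2` is a unit of `R`,
then the Jacobson radical of `R` is a finite set. -/
theorem finite_jacobson_of_ecliqueNum_lt_top (R : Type*) [Ring R]
    (hclique : ecliqueNum (unitGraph R) ≠ ⊤) (h2 : IsUnit (2 : R)) :
    (ringJacobson R : Set R).Finite := by
  rw [← Set.encard_ne_top_iff, ← (add_right_injective (1 : R)).encard_image]
  have h_one_add_one : IsUnit ((1 : R) + 1) := one_add_one_eq_two (R := R) ▸ h2
  exact ne_top_of_le_ne_top hclique
    (encard_le_ecliqueNum (isClique_unitGraph_add_ringJacobson h_one_add_one))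
end

section
/- Let R be a ring such that the independence number α(G(R)) of the unit graph of R is finite and satisfies α(G(R)) ≥ 3. Then R is a finite ring. -/
/-!
If every nonzero element of `R` is a unit, an independent set of the unit graph containing `a`
lies in `{a, -a}`, so the independence number is at most `2`. Otherwise some `a ≠ 0` has no left
inverse. Then the left ideals `R a` and `{r | r a = 0}` are proper, and a proper left ideal is an
independent set since it is closed under addition and contains no unit. Both are therefore
finite, and so is `R`, an extension of the image `R a` of `r ↦ r a` by its kernel.
-/

namespace SimpleGraph

variable {V : Type*} {G : SimpleGraph V} {s : Set V}

theorem IsIndepSet.encard_le_eindepNum (hs : G.IsIndepSet s) : s.encard ≤ eindepNum G :=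
  le_iSup₂ (f := fun (t : Set V) (_ : G.IsIndepSet t) => t.encard) s hs

theorem IsIndepSet.finite_of_eindepNum_ne_top (hs : G.IsIndepSet s) (hG : eindepNum G ≠ ⊤) :
    s.Finite :=
  Set.encard_ne_top_iff.mp (ne_top_of_le_ne_top hG hs.encard_le_eindepNum)

end SimpleGraph

section UnitGraph

variable {R : Type*} [Ring R]

theorem Ideal.isIndepSet_unitGraph {I : Ideal R} (hI : I ≠ ⊤) : (unitGraph R).IsIndepSet I :=
  fun _ ha _ hb _ hadj => hI (Ideal.eq_top_of_isUnit_mem I (I.add_mem ha hb) hadj.2)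

theorem subset_pair_neg_of_isIndepSet_unitGraph (hR : ∀ a : R, a ≠ 0 → IsUnit a) {s : Set R}
    (hs : (unitGraph R).IsIndepSet s) {a : R} (ha : a ∈ s) : s ⊆ {a, -a} := by
  intro b hb
  by_cases hab : b = a
  · exact Or.inl hab
  · have hsum : a + b = 0 := by
      by_contra hsum
      exact hs ha hb (Ne.symm hab) ⟨Ne.symm hab, hR _ hsum⟩
    exact Or.inr (eq_neg_of_add_eq_zero_right hsum)

theorem eindepNum_unitGraph_le_two (hR : ∀ a : R, a ≠ 0 → IsUnit a) :
    eindepNum (unitGraph R) ≤ 2 := by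
  refine iSup₂_le fun s hs => ?_
  obtain rfl | ⟨a, ha⟩ := s.eq_empty_or_nonempty
  · simp
  calc s.encard ≤ ({a, -a} : Set R).encard :=
        Set.encard_mono (subset_pair_neg_of_isIndepSet_unitGraph hR hs ha)
    _ ≤ ({-a} : Set R).encard + 1 := Set.encard_insert_le _ a
    _ = 2 := by rw [Set.encard_singleton]; rfl

/-- If `b a = 1` with `a` not a unit, then `b` has no left inverse, since a left inverse of `b`
would be `a`. -/
theorem exists_ne_zero_forall_mul_ne_one (hR : ¬ ∀ a : R, a ≠ 0 → IsUnit a) :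
    ∃ a : R, a ≠ 0 ∧ ∀ b, b * a ≠ 1 := by
  by_contra! hinv
  refine hR fun a ha => ?_
  obtain ⟨b, hba⟩ := hinv a ha
  have hb : b ≠ 0 := by
    rintro rfl
    rw [zero_mul] at hba
    exact ha (by rw [← one_mul a, ← hba, zero_mul])
  obtain ⟨c, hcb⟩ := hinv b hb
  have hca : c = a := left_inv_eq_right_inv hcb hba
  exact ⟨⟨a, b, hca ▸ hcb, hba⟩, rfl⟩

theorem finite_of_eindepNum_unitGraph_ne_top_of_forall_mul_ne_one
    (hR : eindepNum (unitGraph R) ≠ ⊤) {a : R} (ha : a ≠ 0) (hmul : ∀ b, b * a ≠ 1) :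
    Finite R := by
  set f := LinearMap.toSpanSingleton R R a
  have hker : LinearMap.ker f ≠ ⊤ := fun h =>
    ha (by simpa [f] using (Ideal.eq_top_iff_one _).mp h)
  have hrange : LinearMap.range f ≠ ⊤ := fun h => by
    obtain ⟨b, hb⟩ := (Ideal.eq_top_iff_one _).mp h
    exact hmul b hb
  exact f.toAddMonoidHom.finite_iff_finite_ker_range.mpr
    ⟨((Ideal.isIndepSet_unitGraph hker).finite_of_eindepNum_ne_top hR).to_subtype,
      ((Ideal.isIndepSet_unitGraph hrange).finite_of_eindepNum_ne_top hR).to_subtype⟩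

end UnitGraph

/-- If the independence number of the unit graph of `R` is finite and at least `3`,
then `R` is a finite ring. -/
theorem finite_of_three_le_eindepNum_lt_top (R : Type*) [Ring R]
    (hindep : eindepNum (unitGraph R) ≠ ⊤) (h3 : 3 ≤ eindepNum (unitGraph R)) :
    Finite R := by
  by_cases hdiv : ∀ a : R, a ≠ 0 → IsUnit a
  · exact absurd (h3.trans (eindepNum_unitGraph_le_two hdiv)) (by decide)
  · obtain ⟨a, ha, hmul⟩ := exists_ne_zero_forall_mul_ne_one hdiv
    exact finite_of_eindepNum_unitGraph_ne_top_of_forall_mul_ne_one hindep ha hmul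
end

section
/- Let R be a ring and r a positive integer such that the unit graph G(R) is a complete r-partite graph. Then either R is a local ring with unique maximal left ideal m and r = |R/m| = 2^n for some natural number n ≥ 1, or R is a finite field. -/
/-- A graph `G` is complete `r`-partite if its vertex set admits a partition into `r`
nonempty classes such that two vertices are adjacent iff they lie in different classes. -/
def IsCompleteRPartite {V : Type*} (G : SimpleGraph V) (r : ℕ) : Prop :=
  ∃ P : Fin r → Set V, (∀ v, ∃! i, v ∈ P i) ∧ (∀ i, (P i).Nonempty) ∧
    ∀ a b, G.Adj a b ↔ ∃ i j, i ≠ j ∧ a ∈ P i ∧ b ∈ P j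

theorem IsCompleteRPartite.exists_surjective_adj_iff {V : Type*} {G : SimpleGraph V} {r : ℕ}
    (h : IsCompleteRPartite G r) :
    ∃ c : V → Fin r, Function.Surjective c ∧ ∀ a b, G.Adj a b ↔ c a ≠ c b := by
  obtain ⟨P, huniq, hne, hadj⟩ := h
  choose c hc hcuniq using huniq
  refine ⟨c, fun i => ?_, fun a b => ?_⟩
  · obtain ⟨v, hv⟩ := hne i
    exact ⟨v, (hcuniq v i hv).symm⟩
  · rw [hadj]
    constructor
    · rintro ⟨i, j, hij, ha, hb⟩
      rwa [← hcuniq a i ha, ← hcuniq b j hb]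
    · exact fun hab => ⟨c a, c b, hab, hc a, hc b⟩

namespace IsLocalRing

variable {R : Type*} [Ring R] [IsLocalRing R]

/-- If `a * b = 1` then `b * a` is idempotent, and in a local ring an idempotent is `0` or `1`. -/
instance toIsDedekindFiniteMonoid : IsDedekindFiniteMonoid R where
  mul_eq_one_symm {a b} hab := by
    have hidem : b * a * (b * a) = b * a := by rw [mul_assoc, ← mul_assoc a, hab, one_mul]
    rcases isUnit_or_isUnit_of_add_one (add_sub_cancel (b * a) 1) with hu | hu
    · exact hu.mul_left_cancel (by rw [hidem, mul_one])
    · have hzero : b * a = 0 :=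
        hu.mul_right_cancel (by rw [zero_mul, mul_sub, mul_one, hidem, sub_self])
      have : (1 : R) = 0 :=
        calc (1 : R) = a * b * (a * b) := by rw [hab, one_mul]
          _ = a * (b * a) * b := by simp only [mul_assoc]
          _ = 0 := by rw [hzero, mul_zero, zero_mul]
      exact absurd this one_ne_zero

variable (R) in
def nonunitsIdeal : Ideal R where
  carrier := nonunits R
  add_mem' := nonunits_add
  zero_mem' := zero_mem_nonunits.2 zero_ne_one
  smul_mem' _ _ ha := fun hsa => ha (isUnit_of_mul_isUnit_right hsa)

theorem mem_nonunitsIdeal {x : R} : x ∈ nonunitsIdeal R ↔ ¬IsUnit x := Iff.rfl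

theorem le_nonunitsIdeal {I : Ideal R} (hI : I ≠ ⊤) : I ≤ nonunitsIdeal R :=
  fun _ hx hxu => hI (I.eq_top_of_isUnit_mem hx hxu)

theorem nonunitsIdeal_ne_top : nonunitsIdeal R ≠ ⊤ :=
  fun h => mem_nonunitsIdeal.1 (h ▸ Submodule.mem_top : (1 : R) ∈ nonunitsIdeal R) isUnit_one

theorem isMaximal_nonunitsIdeal : (nonunitsIdeal R).IsMaximal := by
  refine ⟨⟨nonunitsIdeal_ne_top, fun I hI => ?_⟩⟩
  obtain ⟨x, hxI, hx⟩ := SetLike.exists_of_lt hI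
  exact I.eq_top_of_isUnit_mem hxI (not_not.1 hx)

theorem eq_nonunitsIdeal_of_isMaximal {I : Ideal R} (hI : I.IsMaximal) : I = nonunitsIdeal R :=
  hI.eq_of_le nonunitsIdeal_ne_top (le_nonunitsIdeal hI.ne_top)

instance : Nontrivial (R ⧸ nonunitsIdeal R) :=
  Submodule.Quotient.nontrivial_iff.2 nonunitsIdeal_ne_top

theorem add_self_mem_nonunitsIdeal (h2 : ¬IsUnit (2 : R)) (x : R) : x + x ∈ nonunitsIdeal R := by
  simpa only [smul_eq_mul, mul_two] using (nonunitsIdeal R).smul_mem x (mem_nonunitsIdeal.2 h2)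

theorem quotient_add_self (h2 : ¬IsUnit (2 : R)) (x : R ⧸ nonunitsIdeal R) : x + x = 0 := by
  obtain ⟨a, rfl⟩ := Submodule.Quotient.mk_surjective _ x
  rw [← Submodule.Quotient.mk_add, Submodule.Quotient.mk_eq_zero]
  exact add_self_mem_nonunitsIdeal h2 a

end IsLocalRing

theorem exists_natCard_eq_two_pow {G : Type*} [AddCommGroup G] [Finite G] [Nontrivial G]
    (h : ∀ x : G, x + x = 0) : ∃ n, 1 ≤ n ∧ Nat.card G = 2 ^ n := by
  let _ : Module (ZMod 2) G := AddCommGroup.zmodModule fun x => by rw [two_nsmul, h]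
  refine ⟨Module.finrank (ZMod 2) G, Module.finrank_pos, ?_⟩
  rw [Module.natCard_eq_pow_finrank (K := ZMod 2), Nat.card_zmod]

/-! In this namespace `c : R → ι` sends an element to its class, and `hc` says that `G(R)` is the
complete multipartite graph whose classes are the fibres of `c`. -/
namespace unitGraph

open IsLocalRing

variable {R ι : Type*} [Ring R] {c : R → ι} {a b : R}

theorem isUnit_add_of_ne (hc : ∀ a b, (unitGraph R).Adj a b ↔ c a ≠ c b) (h : c a ≠ c b) :
    IsUnit (a + b) :=
  ((hc a b).2 h).2

theorem eq_of_not_isUnit_add (hc : ∀ a b, (unitGraph R).Adj a b ↔ c a ≠ c b)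
    (h : ¬IsUnit (a + b)) : c a = c b :=
  not_not.1 fun hne => h (isUnit_add_of_ne hc hne)

theorem not_isUnit_add_of_eq (hc : ∀ a b, (unitGraph R).Adj a b ↔ c a ≠ c b) (hab : a ≠ b)
    (h : c a = c b) : ¬IsUnit (a + b) :=
  fun hu => (hc a b).1 ⟨hab, hu⟩ h

theorem isLocalRing [Nontrivial R] (hc : ∀ a b, (unitGraph R).Adj a b ↔ c a ≠ c b) :
    IsLocalRing R := by
  refine .of_nonunits_add fun a b ha hb => ?_
  have hclass : ∀ {x : R}, x ∈ nonunits R → c x = c 0 :=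
    fun hx => eq_of_not_isUnit_add hc (by rwa [add_zero])
  by_cases hab : a = b
  · subst hab
    rw [← two_mul]
    exact fun hu => ha ((Commute.ofNat_left 2 a).isUnit_mul_iff.1 hu).2
  · exact not_isUnit_add_of_eq hc hab ((hclass ha).trans (hclass hb).symm)

theorem finite_of_isUnit_of_ne_zero [Finite ι] (hc : ∀ a b, (unitGraph R).Adj a b ↔ c a ≠ c b)
    (hsurj : Function.Surjective c) (h : ∀ x : R, x ≠ 0 → IsUnit x) : Finite R := by
  set s := Function.surjInv hsurj
  have hcover : Set.univ ⊆ Set.range s ∪ Set.range (-s) := by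
    intro x _
    by_cases hx : x = s (c x)
    · exact Or.inl ⟨c x, hx.symm⟩
    · have hsum : ¬IsUnit (x + s (c x)) :=
        not_isUnit_add_of_eq hc hx (Function.surjInv_eq hsurj (c x)).symm
      have : x + s (c x) = 0 := not_not.1 fun hne => hsum (h _ hne)
      exact Or.inr ⟨c x, (eq_neg_of_add_eq_zero_left this).symm⟩
  exact Set.finite_univ_iff.1 (((Set.finite_range s).union (Set.finite_range _)).subset hcover)

theorem not_isUnit_two [IsLocalRing R] (hc : ∀ a b, (unitGraph R).Adj a b ↔ c a ≠ c b) {t : R}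
    (ht0 : t ≠ 0) (ht : ¬IsUnit t) : ¬IsUnit (2 : R) := by
  intro h2
  have hneg : c (-1) = c 1 := eq_of_not_isUnit_add hc (by simp)
  have hsame : c (1 + t) = c 1 :=
    (eq_of_not_isUnit_add hc (by rwa [add_neg_cancel_comm])).trans hneg
  have hunit : IsUnit (1 + t + 1) := by
    by_contra hnu
    have htwo : (2 : R) = 1 + t + 1 + -t := by rw [← one_add_one_eq_two]; abel
    exact nonunits_add hnu (mt (IsUnit.neg_iff t).1 ht) (htwo ▸ h2)
  exact not_isUnit_add_of_eq hc (by simpa using ht0) hsame hunit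

theorem eq_iff_sub_mem_nonunitsIdeal [IsLocalRing R]
    (hc : ∀ a b, (unitGraph R).Adj a b ↔ c a ≠ c b) (h2 : ¬IsUnit (2 : R)) :
    c a = c b ↔ a - b ∈ nonunitsIdeal R := by
  have hsub : a - b = (a + b) - (b + b) := by abel
  have hadd : a + b = (a - b) + (b + b) := by abel
  constructor
  · intro hab
    rw [hsub]
    refine Submodule.sub_mem _ ?_ (add_self_mem_nonunitsIdeal h2 b)
    by_cases heq : a = b
    · exact heq ▸ add_self_mem_nonunitsIdeal h2 a
    · exact not_isUnit_add_of_eq hc heq hab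
  · intro hab
    have hsum := Submodule.add_mem _ hab (add_self_mem_nonunitsIdeal h2 b)
    exact eq_of_not_isUnit_add hc (hadd ▸ hsum)

noncomputable def quotientNonunitsIdealEquiv [IsLocalRing R]
    (hc : ∀ a b, (unitGraph R).Adj a b ↔ c a ≠ c b) (hsurj : Function.Surjective c)
    (h2 : ¬IsUnit (2 : R)) : R ⧸ nonunitsIdeal R ≃ ι :=
  Equiv.ofBijective (Quotient.lift c fun _ _ hab =>
      (eq_iff_sub_mem_nonunitsIdeal hc h2).2 (Submodule.quotientRel_def _ |>.1 hab)) <| by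
    refine ⟨fun x y hxy => ?_, fun i => ⟨Submodule.Quotient.mk (Function.surjInv hsurj i), ?_⟩⟩
    · obtain ⟨a, rfl⟩ := Submodule.Quotient.mk_surjective _ x
      obtain ⟨b, rfl⟩ := Submodule.Quotient.mk_surjective _ y
      exact (Submodule.Quotient.eq _).2 ((eq_iff_sub_mem_nonunitsIdeal hc h2).1 hxy)
    · exact Function.surjInv_eq hsurj i

end unitGraph

theorem unitGraph_completeRPartite_general (R : Type*) [Ring R] [Nontrivial R] (r : ℕ)
    (h : IsCompleteRPartite (unitGraph R) r) :
    (∃ m : Ideal R, m.IsMaximal ∧ (∀ m' : Ideal R, m'.IsMaximal → m' = m) ∧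
      ∃ n : ℕ, 1 ≤ n ∧ r = 2 ^ n ∧ Nat.card (R ⧸ m) = 2 ^ n) ∨
    (Finite R ∧ IsField R) := by
  obtain ⟨c, hsurj, hc⟩ := h.exists_surjective_adj_iff
  have := unitGraph.isLocalRing hc
  by_cases hdiv : ∀ x : R, x ≠ 0 → IsUnit x
  · have := unitGraph.finite_of_isUnit_of_ne_zero hc hsurj hdiv
    let _ := DivisionRing.ofIsUnitOrEqZero fun x => or_iff_not_imp_right.2 (hdiv x)
    exact Or.inr ⟨inferInstance, (littleWedderburn R).toIsField⟩
  push Not at hdiv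
  obtain ⟨t, ht0, ht⟩ := hdiv
  have h2 := unitGraph.not_isUnit_two hc ht0 ht
  let e := unitGraph.quotientNonunitsIdealEquiv hc hsurj h2
  have : Finite (R ⧸ IsLocalRing.nonunitsIdeal R) := .of_equiv _ e.symm
  obtain ⟨n, hn, hcard⟩ := exists_natCard_eq_two_pow (IsLocalRing.quotient_add_self h2)
  refine Or.inl ⟨_, IsLocalRing.isMaximal_nonunitsIdeal,
    fun _ => IsLocalRing.eq_nonunitsIdeal_of_isMaximal, n, hn, ?_, hcard⟩
  rw [← Nat.card_fin r, ← Nat.card_congr e, hcard]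

/-- If the unit graph of a ring `R` is a complete `r`-partite graph (`r ≥ 1`), then
either `R` is a local ring with unique maximal left ideal `m` and
`r = |R/m| = 2^n` for some `n ≥ 1`, or `R` is a finite field. -/
theorem unitGraph_completeRPartite (R : Type*) [Ring R] [Nontrivial R] (r : ℕ)
    (hr : 0 < r) (h : IsCompleteRPartite (unitGraph R) r) :
    (∃ m : Ideal R, m.IsMaximal ∧ (∀ m' : Ideal R, m'.IsMaximal → m' = m) ∧
      ∃ n : ℕ, 1 ≤ n ∧ r = 2 ^ n ∧ Nat.card (R ⧸ m) = 2 ^ n) ∨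
    (Finite R ∧ IsField R) :=
  unitGraph_completeRPartite_general R r h
end

section
/- Let R be a local ring with unique maximal left ideal m such that the quotient R/m has cardinality 2^n for some natural number n ≥ 1. Then the unit graph G(R) is a complete 2^n-partite graph, whose parts are precisely the cosets of m in R. -/
/-!
An element outside the unique maximal left ideal `m` has a left inverse, since otherwise it would
generate a proper left ideal, hence lie in `m`. As the Jacobson radical, `m` is two-sided, so that
left inverse again lies outside `m`; an element whose left inverse is left invertible is a unit.
Hence the units are exactly the elements outside `m`. The additive order of `1` in `R/m` divides
`2^n`, so `2^n ∈ m` and therefore `2 ∈ m`. Then `a + b ≡ a - b (mod m)`, so `a + b` is a unit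
iff `a` and `b` lie in different cosets of `m`.
-/
namespace Ideal

section UniqueMaximal

variable {R : Type*} [Ring R] {m : Ideal R}

theorem jacobson_bot_eq_of_forall_isMaximal_eq (hm : m.IsMaximal)
    (huniq : ∀ m' : Ideal R, m'.IsMaximal → m' = m) : (⊥ : Ideal R).jacobson = m := by
  have hset : {J : Ideal R | ⊥ ≤ J ∧ J.IsMaximal} = {m} := by
    ext J
    simp only [Set.mem_ofPred_eq, bot_le, true_and, Set.mem_singleton_iff]
    exact ⟨huniq J, fun h => h ▸ hm⟩
  rw [jacobson, hset, sInf_singleton]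

theorem exists_mul_eq_one_of_notMem (huniq : ∀ m' : Ideal R, m'.IsMaximal → m' = m) {x : R}
    (hx : x ∉ m) : ∃ y, y * x = 1 := by
  have hspan : span {x} = ⊤ := by
    by_contra hne
    obtain ⟨M, hM, hle⟩ := exists_le_maximal _ hne
    exact hx (huniq M hM ▸ hle (subset_span rfl))
  exact Submodule.mem_span_singleton.mp (hspan ▸ Submodule.mem_top : (1 : R) ∈ span {x})

theorem isUnit_iff_notMem_of_forall_isMaximal_eq (hm : m.IsMaximal)
    (huniq : ∀ m' : Ideal R, m'.IsMaximal → m' = m) {x : R} : IsUnit x ↔ x ∉ m := by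
  refine ⟨fun hu hx => hm.ne_top (eq_top_of_isUnit_mem m hx hu), fun hx => ?_⟩
  have : m.IsTwoSided := jacobson_bot_eq_of_forall_isMaximal_eq hm huniq ▸ inferInstance
  obtain ⟨y, hyx⟩ := exists_mul_eq_one_of_notMem huniq hx
  have hy : y ∉ m := fun hy => hm.ne_top ((eq_top_iff_one m).mpr (hyx ▸ m.mul_mem_right x hy))
  obtain ⟨z, hzy⟩ := exists_mul_eq_one_of_notMem huniq hy
  have hxy : x * y = 1 := left_inv_eq_right_inv hzy hyx ▸ hzy
  exact ⟨⟨x, y, hxy, hyx⟩, rfl⟩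

end UniqueMaximal

theorem natCast_card_quotient_mem {R : Type*} [Ring R] (I : Ideal R) :
    (Nat.card (R ⧸ I) : R) ∈ I := by
  rw [← Submodule.Quotient.mk_eq_zero, ← nsmul_one, Submodule.Quotient.mk_smul]
  exact card_nsmul_eq_zero'

theorem add_mem_iff_sub_mem_of_two_mem {R : Type*} [Ring R] {I : Ideal R} (h2 : (2 : R) ∈ I)
    (a b : R) : a + b ∈ I ↔ a - b ∈ I := by
  have : a + b = a - b + b * 2 := by noncomm_ring
  rw [this, I.add_mem_iff_left (I.mul_mem_left b h2)]

end Ideal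

theorem two_mem_of_card_quotient_eq_two_pow {R : Type*} [Ring R] {m : Ideal R}
    (hm : m.IsMaximal) (huniq : ∀ m' : Ideal R, m'.IsMaximal → m' = m) {n : ℕ}
    (hcard : Nat.card (R ⧸ m) = 2 ^ n) : (2 : R) ∈ m := by
  have hpow : (2 : R) ^ n ∈ m := by exact_mod_cast hcard ▸ m.natCast_card_quotient_mem
  have hunit {x : R} := Ideal.isUnit_iff_notMem_of_forall_isMaximal_eq hm huniq (x := x)
  by_contra h2
  exact hunit.mp ((hunit.mpr h2).pow n) hpow

theorem unitGraph_adj_iff_sub_notMem {R : Type*} [Ring R] {m : Ideal R} (hm : m.IsMaximal)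
    (huniq : ∀ m' : Ideal R, m'.IsMaximal → m' = m) (h2 : (2 : R) ∈ m) (a b : R) :
    (unitGraph R).Adj a b ↔ a - b ∉ m := by
  change a ≠ b ∧ IsUnit (a + b) ↔ _
  rw [Ideal.isUnit_iff_notMem_of_forall_isMaximal_eq hm huniq,
    Ideal.add_mem_iff_sub_mem_of_two_mem h2, and_iff_right_iff_imp]
  rintro hab rfl
  exact hab (by simp)

theorem unitGraph_completeRPartite_of_local_general (R : Type*) [Ring R]
    (m : Ideal R) (hm : m.IsMaximal) (huniq : ∀ m' : Ideal R, m'.IsMaximal → m' = m)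
    (n : ℕ) (hcard : Nat.card (R ⧸ m) = 2 ^ n) :
    ∃ P : Fin (2 ^ n) → Set R,
      (∀ i, ∃ a : R, P i = {x : R | x - a ∈ m}) ∧
      (∀ a : R, ∃ i, {x : R | x - a ∈ m} = P i) ∧
      (∀ v, ∃! i, v ∈ P i) ∧ (∀ i, (P i).Nonempty) ∧
      ∀ a b, (unitGraph R).Adj a b ↔ ∃ i j, i ≠ j ∧ a ∈ P i ∧ b ∈ P j := by
  have : Finite (R ⧸ m) := Nat.finite_of_card_ne_zero (by simp [hcard])
  let e : R ⧸ m ≃ Fin (2 ^ n) := Finite.equivFinOfCardEq hcard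
  let π : R → R ⧸ m := Submodule.Quotient.mk
  have coset_eq (a : R) : {x : R | x - a ∈ m} = π ⁻¹' {π a} := by
    ext x
    simp [π, Submodule.Quotient.eq]
  have hadj := unitGraph_adj_iff_sub_notMem hm huniq
    (two_mem_of_card_quotient_eq_two_pow hm huniq hcard)
  refine ⟨fun i => π ⁻¹' {e.symm i}, fun i => ?_, fun a => ⟨e (π a), by simp [coset_eq]⟩,
    fun v => ⟨e (π v), by simp, fun j (hj : π v = e.symm j) => by simp [hj]⟩,
    fun i => Submodule.Quotient.mk_surjective m (e.symm i), fun a b => ?_⟩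
  · obtain ⟨a, ha⟩ := Submodule.Quotient.mk_surjective m (e.symm i)
    exact ⟨a, by rw [coset_eq]; simp [π, ha]⟩
  · rw [hadj, ← Submodule.Quotient.eq]
    constructor
    · exact fun h => ⟨e (π a), e (π b), e.injective.ne h, by simp, by simp⟩
    · rintro ⟨i, j, hij, (ha : π a = e.symm i), (hb : π b = e.symm j)⟩
      exact fun h => hij (e.symm.injective (ha ▸ hb ▸ h))

/-- If `R` is a local ring with unique maximal left ideal `m` and `|R/m| = 2^n` for
some `n ≥ 1`, then the unit graph `G(R)` is a complete `2^n`-partite graph whose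
parts are precisely the cosets of `m` in `R`. -/
theorem unitGraph_completeRPartite_of_local (R : Type*) [Ring R] [Nontrivial R]
    (m : Ideal R) (hm : m.IsMaximal) (huniq : ∀ m' : Ideal R, m'.IsMaximal → m' = m)
    (n : ℕ) (hn : 1 ≤ n) (hcard : Nat.card (R ⧸ m) = 2 ^ n) :
    ∃ P : Fin (2 ^ n) → Set R,
      (∀ i, ∃ a : R, P i = {x : R | x - a ∈ m}) ∧
      (∀ a : R, ∃ i, {x : R | x - a ∈ m} = P i) ∧
      (∀ v, ∃! i, v ∈ P i) ∧ (∀ i, (P i).Nonempty) ∧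
      ∀ a b, (unitGraph R).Adj a b ↔ ∃ i j, i ≠ j ∧ a ∈ P i ∧ b ∈ P j :=
  unitGraph_completeRPartite_of_local_general R m hm huniq n hcard
end

section
/- Let R be a finite field. Then the unit graph G(R) is a complete r-partite graph for some positive integer r. -/
/-! In a division ring `a + b` is a unit iff `b ≠ -a`, so two vertices of the unit graph are
adjacent iff they lie in different classes `{x, -x}`; these classes are the parts. -/

def negSetoid (A : Type*) [InvolutiveNeg A] : Setoid A where
  r a b := a = b ∨ a = -b
  iseqv := by
    refine ⟨fun _ => Or.inl rfl, ?_, ?_⟩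
    · rintro a b (rfl | rfl)
      exacts [Or.inl rfl, Or.inr (neg_neg b).symm]
    · rintro a b c (rfl | rfl) (rfl | rfl) <;> simp

theorem isCompleteRPartite_of_adj_iff_ne {V ι : Type*} [Finite ι] (G : SimpleGraph V)
    (f : V → ι) (hf : Function.Surjective f) (hadj : ∀ a b, G.Adj a b ↔ f a ≠ f b) :
    IsCompleteRPartite G (Nat.card ι) := by
  let e := Finite.equivFin ι
  refine ⟨fun i => f ⁻¹' {e.symm i}, fun v => ⟨e (f v), by simp, fun i hi => ?_⟩,
    fun i => hf (e.symm i), fun a b => ?_⟩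
  · simp [← show e.symm i = f v from hi.symm]
  · simp only [hadj, Set.mem_preimage, Set.mem_singleton_iff]
    constructor
    · exact fun h => ⟨e (f a), e (f b), by simpa using h, by simp, by simp⟩
    · rintro ⟨i, j, hij, ha, hb⟩
      rw [ha, hb]
      exact e.symm.injective.ne hij

theorem unitGraph_adj_iff_mk_neg_ne {K : Type*} [DivisionRing K] (a b : K) :
    (unitGraph K).Adj a b ↔
      Quotient.mk (negSetoid K) a ≠ Quotient.mk (negSetoid K) b := by
  rw [Ne, Quotient.eq]
  show a ≠ b ∧ IsUnit (a + b) ↔ ¬(a = b ∨ a = -b)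
  simp only [isUnit_iff_ne_zero, ne_eq, add_eq_zero_iff_eq_neg, not_or]

/-- The unit graph of a finite field is a complete `r`-partite graph for some `r ≥ 1`. -/
theorem unitGraph_finiteField_completeRPartite (F : Type*) [Field F] [Finite F] :
    ∃ r : ℕ, 0 < r ∧ IsCompleteRPartite (unitGraph F) r := by
  have : Nonempty (Quotient (negSetoid F)) := ⟨Quotient.mk _ 0⟩
  exact ⟨Nat.card (Quotient (negSetoid F)), Nat.card_pos,
    isCompleteRPartite_of_adj_iff_ne (unitGraph F) _ Quotient.mk_surjective
      unitGraph_adj_iff_mk_neg_ne⟩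
end

section
/- Let R be a ring such that the unit graph G(R) is a complete r-partite graph for some positive integer r. Then R is a local ring, i.e., R has exactly one maximal left ideal; equivalently, for every x in R, either x is a unit or 1 - x is a unit. -/
theorem IsCompleteRPartite.isCompleteMultipartite {V : Type*} {G : SimpleGraph V} {r : ℕ}
    (h : IsCompleteRPartite G r) : G.IsCompleteMultipartite := by
  obtain ⟨P, huniq, -, hadj⟩ := h
  refine ⟨fun u v w huv hvw huw => ?_⟩
  obtain ⟨i, j, hij, hu, hw⟩ := (hadj u w).1 huw
  obtain ⟨k, hv, -⟩ := huniq v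
  by_cases hik : i = k
  · exact hvw ((hadj v w).2 ⟨k, j, hik ▸ hij, hv, hw⟩)
  · exact huv ((hadj u v).2 ⟨i, k, hik, hu, hv⟩)

section UnitGraph

variable {R : Type*} [Ring R]

theorem unitGraph_adj_zero_right {x : R} (h : (unitGraph R).Adj x 0) : IsUnit x := by
  simpa using h.2

theorem isUnit_or_isUnit_one_sub_of_isCompleteMultipartite
    (h : (unitGraph R).IsCompleteMultipartite) (x : R) : IsUnit x ∨ IsUnit (1 - x) := by
  by_contra! hx
  have hx0 : ¬ (unitGraph R).Adj x 0 := fun h => hx.1 (unitGraph_adj_zero_right h)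
  have h0x : ¬ (unitGraph R).Adj 0 (1 - x) := fun h => hx.2 (unitGraph_adj_zero_right h.symm)
  have hxx : x = 1 - x := by
    by_contra hne
    exact h.trans _ _ _ hx0 h0x ⟨hne, by simp⟩
  have htwo : x + x = 1 := by rw [← add_sub_cancel x 1]; nth_rw 2 [hxx]
  exact hx.1 ⟨⟨x, 2, by rw [mul_two, htwo], by rw [two_mul, htwo]⟩, rfl⟩

end UnitGraph

namespace IsLocalRing

variable {R : Type*} [Ring R] [IsLocalRing R]

theorem isUnit_of_mul_eq_one_right {a b : R} (h : a * b = 1) : IsUnit b := by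
  have he : IsIdempotentElem (b * a) := by
    rw [IsIdempotentElem, mul_assoc, ← mul_assoc a, h, one_mul]
  rcases isUnit_or_isUnit_of_add_one (add_sub_cancel (b * a) 1) with hu | hu
  · exact ⟨⟨b, a, (IsIdempotentElem.iff_eq_one_of_isUnit hu).1 he, h⟩, rfl⟩
  · have hba : b * a = 0 := by
      simpa using (IsIdempotentElem.iff_eq_one_of_isUnit hu).1 he.one_sub
    have hb : b = 0 := by rw [← mul_one b, ← h, ← mul_assoc, hba, zero_mul]
    exact absurd (h.symm.trans (by rw [hb, mul_zero])) one_ne_zero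

theorem mul_mem_nonunits_left (c : R) {a : R} (ha : a ∈ nonunits R) : c * a ∈ nonunits R := by
  rintro ⟨u, hu⟩
  exact ha (isUnit_of_mul_eq_one_right (a := ↑u⁻¹ * c) (by rw [mul_assoc, ← hu, u.inv_mul]))

variable (R) in
def nonunitsLeftIdeal : Ideal R where
  __ := nonunitsAddSubmonoid R
  smul_mem' := mul_mem_nonunits_left

theorem mem_nonunitsLeftIdeal {x : R} : x ∈ nonunitsLeftIdeal R ↔ ¬ IsUnit x := Iff.rfl

theorem le_nonunitsLeftIdeal {I : Ideal R} (hI : I ≠ ⊤) : I ≤ nonunitsLeftIdeal R :=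
  fun _ hx hu => hI (Ideal.eq_top_of_isUnit_mem I hx hu)

theorem nonunitsLeftIdeal_ne_top : nonunitsLeftIdeal R ≠ ⊤ :=
  fun h => mem_nonunitsLeftIdeal.1 (h ▸ Submodule.mem_top : (1 : R) ∈ _) isUnit_one

theorem nonunitsLeftIdeal_isMaximal : (nonunitsLeftIdeal R).IsMaximal := by
  refine ⟨⟨nonunitsLeftIdeal_ne_top, fun I hI => ?_⟩⟩
  obtain ⟨x, hxI, hx⟩ := SetLike.exists_of_lt hI
  exact Ideal.eq_top_of_isUnit_mem I hxI (not_not.1 hx)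

variable (R) in
theorem existsUnique_isMaximal : ∃! m : Ideal R, m.IsMaximal :=
  ⟨nonunitsLeftIdeal R, nonunitsLeftIdeal_isMaximal, fun _ hJ =>
    hJ.eq_of_le nonunitsLeftIdeal_ne_top (le_nonunitsLeftIdeal hJ.ne_top)⟩

end IsLocalRing

theorem localRing_of_unitGraph_completeRPartite_general (R : Type*) [Ring R] [Nontrivial R]
    (r : ℕ) (h : IsCompleteRPartite (unitGraph R) r) :
    (∃! m : Ideal R, m.IsMaximal) ∧ ∀ x : R, IsUnit x ∨ IsUnit (1 - x) := by
  have hloc := isUnit_or_isUnit_one_sub_of_isCompleteMultipartite h.isCompleteMultipartite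
  have : IsLocalRing R := .of_isUnit_or_isUnit_one_sub_self hloc
  exact ⟨IsLocalRing.existsUnique_isMaximal R, hloc⟩

/-- If the unit graph of a ring `R` is complete `r`-partite for some `r ≥ 1`, then
`R` is a local ring: it has exactly one maximal left ideal, and for every `x : R`
either `x` or `1 - x` is a unit. -/
theorem localRing_of_unitGraph_completeRPartite (R : Type*) [Ring R] [Nontrivial R]
    (r : ℕ) (hr : 0 < r) (h : IsCompleteRPartite (unitGraph R) r) :
    (∃! m : Ideal R, m.IsMaximal) ∧ ∀ x : R, IsUnit x ∨ IsUnit (1 - x) :=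
  localRing_of_unitGraph_completeRPartite_general R r h
end

section
/- Let D be a division ring and n ≥ 2 a natural number. Then the unit graph G(M_n(D)) of the ring of n × n matrices over D contains a triangle, i.e., there exist three pairwise adjacent vertices; in particular G(M_n(D)) is not bipartite. -/
/-! The triangle is `0, 1, u` for any `u` with `u - 1`, `u`, `u + 1` all units; invertibility of
`u - 1` is what makes `u ≠ 1` in every characteristic. Such a `u` exists in `M_n(ℤ)` for
`n ≥ 2` (for instance the companion matrices of `t² + t - 1` and `t³ - t + 1`, whose values at
`-1, 0, 1` are `±1`, together with their block sums), and its image in `M_n(R)` works for every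
nontrivial ring `R`. -/

open Matrix

def IsUnitWithNeighbors {R : Type*} [Ring R] (x : R) : Prop :=
  IsUnit (x - 1) ∧ IsUnit x ∧ IsUnit (x + 1)

namespace IsUnitWithNeighbors

theorem map {R S F : Type*} [Ring R] [Ring S] [FunLike F R S] [RingHomClass F R S] (f : F)
    {x : R} (hx : IsUnitWithNeighbors x) : IsUnitWithNeighbors (f x) := by
  obtain ⟨hx_sub, hx, hx_add⟩ := hx
  exact ⟨by simpa using hx_sub.map f, hx.map f, by simpa using hx_add.map f⟩

theorem fromBlocks {R m n : Type*} [CommRing R] [Fintype m] [Fintype n] [DecidableEq m]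
    [DecidableEq n] {A : Matrix m m R} {B : Matrix n n R} (hA : IsUnitWithNeighbors A)
    (hB : IsUnitWithNeighbors B) : IsUnitWithNeighbors (Matrix.fromBlocks A 0 0 B) := by
  obtain ⟨hA_sub, hA, hA_add⟩ := hA
  obtain ⟨hB_sub, hB, hB_add⟩ := hB
  refine ⟨?_, isUnit_fromBlocks_zero₂₁.mpr ⟨hA, hB⟩, ?_⟩
  · rw [← fromBlocks_one, sub_eq_add_neg, fromBlocks_neg, fromBlocks_add]
    simpa [← sub_eq_add_neg] using ⟨hA_sub, hB_sub⟩
  · rw [← fromBlocks_one, fromBlocks_add]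
    simpa using ⟨hA_add, hB_add⟩

end IsUnitWithNeighbors

theorem unitGraph_isNClique_zero_one {R : Type*} [Ring R] [Nontrivial R] [DecidableEq R]
    {u : R} (hu : IsUnitWithNeighbors u) : (unitGraph R).IsNClique 3 {0, 1, u} := by
  obtain ⟨hu_sub, hu, hu_add⟩ := hu
  rw [SimpleGraph.is3Clique_triple_iff]
  refine ⟨⟨zero_ne_one, by simp⟩, ⟨hu.ne_zero.symm, by simpa using hu⟩, ?_, ?_⟩
  · exact fun h => hu_sub.ne_zero (by rw [← h, sub_self])
  · rwa [add_comm]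

theorem isUnitWithNeighbors_fin_two : IsUnitWithNeighbors !![(0 : ℤ), 1; 1, -1] := by
  simp only [IsUnitWithNeighbors, isUnit_iff_isUnit_det, Int.isUnit_iff]
  refine ⟨?_, ?_, ?_⟩ <;> simp [det_fin_two]

theorem isUnitWithNeighbors_fin_three :
    IsUnitWithNeighbors !![(0 : ℤ), 0, -1; 1, 0, 1; 0, 1, 0] := by
  simp only [IsUnitWithNeighbors, isUnit_iff_isUnit_det, Int.isUnit_iff]
  refine ⟨?_, ?_, ?_⟩ <;> simp [det_fin_three]

theorem exists_isUnitWithNeighbors_int_matrix :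
    ∀ n, 2 ≤ n → ∃ U : Matrix (Fin n) (Fin n) ℤ, IsUnitWithNeighbors U
  | 2, _ => ⟨_, isUnitWithNeighbors_fin_two⟩
  | 3, _ => ⟨_, isUnitWithNeighbors_fin_three⟩
  | n + 4, _ => by
    obtain ⟨U, hU⟩ := exists_isUnitWithNeighbors_int_matrix (n + 2) (by omega)
    exact ⟨_, (hU.fromBlocks isUnitWithNeighbors_fin_two).map
      (reindexRingEquiv ℤ finSumFinEquiv)⟩

theorem exists_isUnitWithNeighbors_matrix (R : Type*) [Ring R] {n : ℕ} (hn : 2 ≤ n) :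
    ∃ U : Matrix (Fin n) (Fin n) R, IsUnitWithNeighbors U :=
  let ⟨_, hU⟩ := exists_isUnitWithNeighbors_int_matrix n hn
  ⟨_, hU.map (Int.castRingHom R).mapMatrix⟩

/-- For a division ring `D` and `n ≥ 2`, the unit graph of the matrix ring `M_n(D)`
contains a triangle; in particular it is not bipartite. -/
theorem unitGraph_matrix_contains_triangle (D : Type*) [DivisionRing D] (n : ℕ)
    (hn : 2 ≤ n) :
    (∃ A B C : Matrix (Fin n) (Fin n) D,
        (unitGraph (Matrix (Fin n) (Fin n) D)).Adj A B ∧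
        (unitGraph (Matrix (Fin n) (Fin n) D)).Adj B C ∧
        (unitGraph (Matrix (Fin n) (Fin n) D)).Adj A C) ∧
      ¬ (unitGraph (Matrix (Fin n) (Fin n) D)).Colorable 2 := by
  classical
  have : NeZero n := ⟨by omega⟩
  obtain ⟨u, hu⟩ := exists_isUnitWithNeighbors_matrix D hn
  have hclique := unitGraph_isNClique_zero_one hu
  obtain ⟨h01, h0u, h1u⟩ := SimpleGraph.is3Clique_triple_iff.mp hclique
  exact ⟨⟨0, 1, u, h01, h1u, h0u⟩, fun hc => hc.cliqueFree (by norm_num) _ hclique⟩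
end
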